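/- arXiv:2411.03528 — 4 statements merged into one kernel-verified Lean document; each statement's English description precedes it below -/
import Mathlib

section
/- Suppose 0 < ε ≤ 1/9 and 0 < θ ≤ 1/9, and set θ* := θ/(1−ε). Then for every positive integer n, the n-th power (under matrix multiplication) of the 3×3 matrix ℙ^{(ε,θ)} satisfies (ℙ^{(ε,θ)})^n = (1−θ*)^n·I_3 + [1 − (1−θ*)^n]·A^{(ε)} + [(1−θ)^n − (1−θ*)^n]·C. -/
open MeasureTheory ProbabilityTheory Filter Topology

noncomputable section

/-- The index set `{−1, 0, 1} ⊆ ℤ` for the 3×3 matrices. -/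
def S3 : Finset ℤ := {-1, 0, 1}

/-- The one-step transition probability matrix `ℙ^{(ε,θ)}`, indexed by `{−1,0,1}`
(with `θ* := θ/(1−ε)`): `p_{0,0} = 1 − θ*ε`; `p_{0,−1} = p_{0,1} = θ*ε/2`;
`p_{−1,−1} = p_{1,1} = 1 − θ`; `p_{−1,0} = p_{1,0} = θ`; `p_{−1,1} = p_{1,−1} = 0`. -/
def Pmat (ε θ : ℝ) : Matrix S3 S3 ℝ :=
  Matrix.of fun i j =>
    if (i : ℤ) = 0 ∧ (j : ℤ) = 0 then 1 - (θ / (1 - ε)) * ε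
    else if (i : ℤ) = 0 then (θ / (1 - ε)) * ε / 2
    else if (j : ℤ) = 0 then θ
    else if (i : ℤ) = (j : ℤ) then 1 - θ
    else 0

/-- The invariant probability vector `π^{(ε)}`: `π_0 = 1 − ε`, `π_{−1} = π_1 = ε/2`. -/
def piVec (ε : ℝ) : S3 → ℝ := fun j => if (j : ℤ) = 0 then 1 - ε else ε / 2

/-- The matrix `A^{(ε)}`, each of whose rows equals `π^{(ε)}`. -/
def Amat (ε : ℝ) : Matrix S3 S3 ℝ :=
  Matrix.of fun _ j => piVec ε j

/-- The matrix `C`: `c_{−1,−1} = c_{1,1} = 1/2`, `c_{−1,1} = c_{1,−1} = −1/2`, and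
`c_{i,j} = 0` whenever `i = 0` or `j = 0`. -/
def Cmat : Matrix S3 S3 ℝ :=
  Matrix.of fun i j =>
    if (i : ℤ) = 0 ∨ (j : ℤ) = 0 then 0
    else if (i : ℤ) = (j : ℤ) then 1 / 2
    else -(1 / 2)

/-
With `θ* = θ/(1−ε)` one has `ℙ = (1−θ*)·I + θ*·A + (θ*−θ)·C`, and `A·ℙ = A` (the rows of `A` are
the invariant law) while `C·ℙ = (1−θ)·C`. So right multiplication by `ℙ` preserves the span of
`I, A, C`, and following the three coefficients gives the formula by induction on `n`.
-/

theorem pow_eq_of_mul_eq_self_of_mul_eq_smul {R M : Type*} [CommRing R] [Ring M] [Algebra R M]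
    {P A C : M} {μ ρ : R} (hP : P = μ • 1 + (1 - μ) • A + (ρ - μ) • C)
    (hA : A * P = A) (hC : C * P = ρ • C) (n : ℕ) :
    P ^ n = μ ^ n • 1 + (1 - μ ^ n) • A + (ρ ^ n - μ ^ n) • C := by
  induction n with
  | zero => simp
  | succ n ih =>
    calc P ^ (n + 1) = μ ^ n • P + (1 - μ ^ n) • (A * P) + (ρ ^ n - μ ^ n) • (C * P) := by
          rw [pow_succ, ih, add_mul, add_mul, smul_mul_assoc, smul_mul_assoc, smul_mul_assoc,
            one_mul]
      _ = _ := by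
          rw [hA, hC, hP]
          simp only [smul_add, smul_smul]
          module

lemma sum_S3 {β : Type*} [AddCommMonoid β] (f : S3 → β) :
    ∑ x : S3, f x = f ⟨-1, by decide⟩ + f ⟨0, by decide⟩ + f ⟨1, by decide⟩ := by
  let g : ℤ → β := fun y => if h : y ∈ S3 then f ⟨y, h⟩ else 0
  calc ∑ x : S3, f x = ∑ x : S3, g x := Fintype.sum_congr _ _ fun x => by simp [g]
    _ = ∑ x ∈ S3, g x := Finset.sum_coe_sort S3 g
    _ = _ := by simp [S3, g, add_assoc]

lemma Pmat_eq {ε : ℝ} (θ : ℝ) (hε : 1 - ε ≠ 0) :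
    Pmat ε θ = (1 - θ / (1 - ε)) • (1 : Matrix S3 S3 ℝ) + (1 - (1 - θ / (1 - ε))) • Amat ε
      + ((1 - θ) - (1 - θ / (1 - ε))) • Cmat := by
  ext ⟨i, hi⟩ ⟨j, hj⟩
  -- removing `SetLike.coe_eq_coe` keeps index comparisons in `ℤ`, where `simp` decides them
  fin_cases hi <;> fin_cases hj <;>
    simp [Pmat, Amat, Cmat, piVec, Subtype.ext_iff, -SetLike.coe_eq_coe] <;> field_simp <;> ring

lemma Amat_mul_Pmat {ε : ℝ} (θ : ℝ) (hε : 1 - ε ≠ 0) : Amat ε * Pmat ε θ = Amat ε := by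
  ext i ⟨j, hj⟩
  rw [Matrix.mul_apply, sum_S3]
  fin_cases hj <;> simp [Pmat, Amat, piVec, -SetLike.coe_eq_coe] <;> field_simp <;> ring

lemma Cmat_mul_Pmat (ε θ : ℝ) : Cmat * Pmat ε θ = (1 - θ) • Cmat := by
  ext ⟨i, hi⟩ ⟨j, hj⟩
  rw [Matrix.mul_apply, sum_S3]
  fin_cases hi <;> fin_cases hj <;> simp [Pmat, Cmat, -SetLike.coe_eq_coe] <;> ring

theorem stmt4_general (ε θ : ℝ) (hε : 0 < ε ∧ ε ≤ 1 / 9)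
    (n : ℕ) :
    (Pmat ε θ) ^ n =
      (1 - θ / (1 - ε)) ^ n • (1 : Matrix S3 S3 ℝ)
        + (1 - (1 - θ / (1 - ε)) ^ n) • Amat ε
        + ((1 - θ) ^ n - (1 - θ / (1 - ε)) ^ n) • Cmat := by
  have hε' : 1 - ε ≠ 0 := by linarith [hε.2]
  exact pow_eq_of_mul_eq_self_of_mul_eq_smul (Pmat_eq θ hε') (Amat_mul_Pmat θ hε')
    (Cmat_mul_Pmat ε θ) n

/-- Formula (5.16) of the paper: for `0 < ε ≤ 1/9`, `0 < θ ≤ 1/9`, `θ* := θ/(1−ε)`, and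
every `n ≥ 1`, `(ℙ^{(ε,θ)})^n = (1−θ*)^n·I + (1 − (1−θ*)^n)·A^{(ε)}
+ ((1−θ)^n − (1−θ*)^n)·C`. -/
theorem stmt4 (ε θ : ℝ) (hε : 0 < ε ∧ ε ≤ 1 / 9) (hθ : 0 < θ ∧ θ ≤ 1 / 9)
    (n : ℕ) (hn : 0 < n) :
    (Pmat ε θ) ^ n =
      (1 - θ / (1 - ε)) ^ n • (1 : Matrix S3 S3 ℝ)
        + (1 - (1 - θ / (1 - ε)) ^ n) • Amat ε
        + ((1 - θ) ^ n - (1 - θ / (1 - ε)) ^ n) • Cmat :=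
  stmt4_general ε θ hε n
end
end

section
/- Suppose φ : [1,∞) → (−∞,0] is strictly decreasing and convex, with lim_{x→∞} φ(x) = −∞ and lim_{x→∞} φ(x)/x = 0. Let Γ denote the set of points x ∈ (1,∞) at which φ is not differentiable. Then for every negative number D and every positive number s, there exists T > 1 with the following property: for every y ∈ [T,∞) with y ∉ Γ, one has −s ≤ φ′(y) < 0 and φ(y) − y·φ′(y) ≤ D. (Equivalently: the affine function L^{(y)}(x) := φ(y) + φ′(y)(x − y), whose graph is the tangent line to the graph of φ at (y, φ(y)), has slope φ′(y) ∈ [−s, 0) and satisfies L^{(y)}(0) ≤ D.) -/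
/-!
Fix `x₀ ≥ 1` with `φ x₀ ≤ 2D`. Since `φ(y)/y → 0`, the secant slopes `slope φ x₀ y` tend to `0`,
and by convexity they bound `φ′(y)` from below for `y > x₀`; so eventually `φ′(y) ≥ -ε` with
`ε = min s (-D/x₀)`. Strict decrease gives `φ′(y) < 0`. Finally the tangent line at `y` lies below
`φ` at `x₀`, so its value at `0` is at most `φ x₀ - x₀ φ′(y) ≤ 2D + x₀ ε ≤ D`.
-/

open Filter Topology

theorem tendsto_slope_atTop_of_tendsto_div {f : ℝ → ℝ} {L : ℝ}
    (hf : Tendsto (fun x => f x / x) atTop (𝓝 L)) (a : ℝ) :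
    Tendsto (slope f a) atTop (𝓝 L) := by
  have hnum : Tendsto (fun y => (f y - f a) / y) atTop (𝓝 L) := by
    simpa [sub_div] using hf.sub ((tendsto_const_nhds (x := f a)).div_atTop tendsto_id)
  have hden : Tendsto (fun y => (y - a) / y) atTop (𝓝 1) := by
    have h := (tendsto_const_nhds (x := (1 : ℝ))).sub
      ((tendsto_const_nhds (x := a)).div_atTop tendsto_id)
    rw [sub_zero] at h
    refine h.congr' ?_
    filter_upwards [eventually_ne_atTop 0] with y hy
    rw [id, sub_div, div_self hy]
  have h := hnum.div hden one_ne_zero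
  rw [div_one] at h
  refine h.congr' ?_
  filter_upwards [eventually_ne_atTop 0] with y hy
  rw [slope_def_field, Pi.div_apply, div_div_div_cancel_right₀ hy]

namespace ConvexOn

variable {S : Set ℝ} {f : ℝ → ℝ} {x y : ℝ}

theorem add_deriv_mul_sub_le (hfc : ConvexOn ℝ S f) (hx : x ∈ S) (hy : y ∈ S) (hxy : x < y)
    (hfd : DifferentiableAt ℝ f y) : f y + deriv f y * (x - y) ≤ f x := by
  have h := hfc.slope_le_deriv hx hy hxy hfd
  rw [slope_def_field, div_le_iff₀ (sub_pos.2 hxy)] at h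
  linarith

theorem deriv_neg_of_strictAntiOn (hfc : ConvexOn ℝ S f) (hf : StrictAntiOn f S) (hx : x ∈ S)
    (hy : y ∈ S) (hxy : x < y) (hfd : DifferentiableAt ℝ f x) : deriv f x < 0 :=
  (hfc.deriv_le_slope hx hy hxy hfd).trans_lt (hf.slope_neg hx hy hxy.ne)

end ConvexOn

theorem stmt15_general (φ : ℝ → ℝ)
    (hanti : StrictAntiOn φ (Set.Ici (1 : ℝ)))
    (hconv : ConvexOn ℝ (Set.Ici (1 : ℝ)) φ)
    (hlim1 : Tendsto φ atTop atBot)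
    (hlim2 : Tendsto (fun x => φ x / x) atTop (nhds 0))
    (D s : ℝ) (hD : D < 0) (hs : 0 < s) :
    ∃ T : ℝ, 1 < T ∧ ∀ y : ℝ, T ≤ y → DifferentiableAt ℝ φ y →
      -s ≤ deriv φ y ∧ deriv φ y < 0 ∧ φ y - y * deriv φ y ≤ D := by
  obtain ⟨x₀, hφx₀, hx₀⟩ :=
    ((hlim1.eventually_le_atBot (2 * D)).and (eventually_ge_atTop (1 : ℝ))).exists
  have hx₀pos : 0 < x₀ := zero_lt_one.trans_le hx₀
  set ε := min s (-D / x₀)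
  have hε : 0 < ε := lt_min hs (div_pos (neg_pos.2 hD) hx₀pos)
  have hx₀ε : x₀ * ε ≤ -D := by
    calc x₀ * ε ≤ x₀ * (-D / x₀) := mul_le_mul_of_nonneg_left (min_le_right _ _) hx₀pos.le
      _ = -D := mul_div_cancel₀ _ hx₀pos.ne'
  obtain ⟨T₀, hT₀⟩ := ((tendsto_slope_atTop_of_tendsto_div hlim2 x₀).eventually
    (eventually_ge_nhds (neg_lt_zero.2 hε))).exists_forall_of_atTop
  refine ⟨max T₀ (x₀ + 1), by linarith [le_max_right T₀ (x₀ + 1)], fun y hy hφy => ?_⟩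
  have hx₀y : x₀ < y := by linarith [le_max_right T₀ (x₀ + 1)]
  have hy1 : y ∈ Set.Ici (1 : ℝ) := hx₀.trans hx₀y.le
  have hderiv : -ε ≤ deriv φ y :=
    (hT₀ y (le_of_max_le_left hy)).trans (hconv.slope_le_deriv hx₀ hy1 hx₀y hφy)
  have htangent := hconv.add_deriv_mul_sub_le hx₀ hy1 hx₀y hφy
  refine ⟨(neg_le_neg (min_le_left _ _)).trans hderiv,
    hconv.deriv_neg_of_strictAntiOn hanti hy1 (Set.mem_Ici.2 (by linarith)) (lt_add_one y) hφy, ?_⟩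
  linarith [mul_le_mul_of_nonneg_left hderiv hx₀pos.le]

/-- Lemma 6.5(II) of the paper: if `φ : [1,∞) → (−∞,0]` is strictly decreasing and
convex with `φ(x) → −∞` and `φ(x)/x → 0` as `x → ∞`, then for every `D < 0` and `s > 0`
there is `T > 1` such that at every point `y ≥ T` of differentiability,
`−s ≤ φ′(y) < 0` and the tangent line at `y` satisfies `L^{(y)}(0) = φ(y) − y·φ′(y) ≤ D`. -/
theorem stmt15 (φ : ℝ → ℝ)
    (hrange : ∀ x ∈ Set.Ici (1 : ℝ), φ x ≤ 0)
    (hanti : StrictAntiOn φ (Set.Ici (1 : ℝ)))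
    (hconv : ConvexOn ℝ (Set.Ici (1 : ℝ)) φ)
    (hlim1 : Tendsto φ atTop atBot)
    (hlim2 : Tendsto (fun x => φ x / x) atTop (nhds 0))
    (D s : ℝ) (hD : D < 0) (hs : 0 < s) :
    ∃ T : ℝ, 1 < T ∧ ∀ y : ℝ, T ≤ y → DifferentiableAt ℝ φ y →
      -s ≤ deriv φ y ∧ deriv φ y < 0 ∧ φ y - y * deriv φ y ≤ D :=
  stmt15_general φ hanti hconv hlim1 hlim2 D s hD hs
end

section
/- Suppose (ζ_1, ζ_2, ζ_3, …) is a sequence of real numbers with 0 < ζ_n < 1 for every n ∈ ℕ, such that ζ_n → 0 as n → ∞ and for every c > 0, ζ_n·e^{cn} → ∞ as n → ∞. Then there exists a function φ : ℝ → ℝ with the following properties: (a) φ(0) = 0; (b) for every positive integer n, φ(n) ≤ log ζ_n, and hence exp(φ(n)) ≤ ζ_n; (c) φ is continuous and strictly decreasing on ℝ; (d) φ is convex on ℝ; (e) lim_{x→∞} φ(x) = −∞; (f) lim_{x→∞} φ(x)/x = 0. -/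
open MeasureTheory ProbabilityTheory Filter Topology

open Set

noncomputable section

/-!
Put `a n = log ζ n` and take for `φ` the upper envelope of all lines `x ↦ q - c x` with
`q ≤ 0` and `0 ≤ c ≤ C` lying below `a` at every positive integer. As a supremum of affine
functions, `φ` is convex, hence continuous. The line of slope `-C` through the origin belongs
to the family once `C` is large, because `a n + n` is bounded below; so `φ 0 = 0`. Since the
lines decrease, `φ x ≤ a ⌊x⌋ → -∞`, and a convex function tending to `-∞` is strictly
decreasing. Finally, `a n + c n → ∞` for every `c > 0` provides a line of slope `-c` in the
family, which forces `liminf φ x / x ≥ -c`.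
-/

theorem convexOn_ciSup {ι E : Type*} [Nonempty ι] [AddCommMonoid E] [Module ℝ E] {s : Set E}
    {f : ι → E → ℝ} (hf : ∀ i, ConvexOn ℝ s (f i))
    (hbdd : ∀ x ∈ s, BddAbove (range fun i => f i x)) :
    ConvexOn ℝ s (fun x => ⨆ i, f i x) := by
  refine ⟨(hf (Classical.arbitrary ι)).1, fun x hx y hy a b ha hb hab => ciSup_le fun i => ?_⟩
  calc f i (a • x + b • y) ≤ a • f i x + b • f i y := (hf i).2 hx hy ha hb hab
    _ ≤ a • (⨆ j, f j x) + b • (⨆ j, f j y) := by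
      gcongr
      exacts [le_ciSup (hbdd x hx) i, le_ciSup (hbdd y hy) i]

theorem convexOn_const_sub_mul (q c : ℝ) : ConvexOn ℝ univ (fun x : ℝ => q - c * x) := by
  refine ⟨convex_univ, fun x _ y _ a b _ _ hab => le_of_eq ?_⟩
  simp only [smul_eq_mul]
  linear_combination (-q) * hab

theorem ConvexOn.strictAnti_of_tendsto_atBot {f : ℝ → ℝ} (hf : ConvexOn ℝ univ f)
    (hbot : Tendsto f atTop atBot) : StrictAnti f := by
  intro x y hxy
  by_contra! hle
  obtain ⟨z, hz, hyz⟩ := ((hbot.eventually_lt_atBot (f y)).and (eventually_gt_atTop y)).exists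
  have : f y ≤ f z := hf.le_right_of_left_le (mem_univ x) (mem_univ z)
    (Ioo_subset_openSegment ⟨hxy, hyz⟩) hle
  linarith

theorem tendsto_div_self_zero_of_forall_minorant {f : ℝ → ℝ} (hf : ∀ᶠ x in atTop, f x ≤ 0)
    (hmin : ∀ ε > 0, ∃ q, ∀ᶠ x in atTop, q - ε * x ≤ f x) :
    Tendsto (fun x => f x / x) atTop (𝓝 0) := by
  refine tendsto_order.2 ⟨fun b hb => ?_, fun b hb => ?_⟩
  · obtain ⟨q, hq⟩ := hmin (-b / 2) (by linarith)
    have hlim : Tendsto (fun x => q / x - -b / 2) atTop (𝓝 (0 - -b / 2)) :=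
      (tendsto_const_nhds.div_atTop tendsto_id).sub_const _
    filter_upwards [hlim.eventually (lt_mem_nhds (show b < 0 - -b / 2 by linarith)), hq,
      eventually_gt_atTop 0] with x hlt hqx hx
    calc b < q / x - -b / 2 := hlt
      _ = (q - -b / 2 * x) / x := by field_simp
      _ ≤ f x / x := by gcongr
  · filter_upwards [hf, eventually_gt_atTop 0] with x hfx hx
    exact (div_nonpos_of_nonpos_of_nonneg hfx hx.le).trans_lt hb

def IsMinorantLine (a : ℕ → ℝ) (C : ℝ) (l : ℝ × ℝ) : Prop :=
  l.1 ≤ 0 ∧ l.2 ∈ Icc 0 C ∧ ∀ n : ℕ, 0 < n → l.1 - l.2 * n ≤ a n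

def minorantEnvelope (a : ℕ → ℝ) (C : ℝ) (x : ℝ) : ℝ :=
  ⨆ l : {l : ℝ × ℝ // IsMinorantLine a C l}, l.1.1 - l.1.2 * x

section MinorantEnvelope

variable {a : ℕ → ℝ} {C : ℝ}

theorem IsMinorantLine.le_mul_abs {l : ℝ × ℝ} (hl : IsMinorantLine a C l) (x : ℝ) :
    l.1 - l.2 * x ≤ C * |x| := by
  obtain ⟨hq, ⟨hc₀, hcC⟩, -⟩ := hl
  nlinarith [neg_abs_le x, abs_nonneg x]

theorem bddAbove_range_minorantLine (x : ℝ) :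
    BddAbove (range fun l : {l : ℝ × ℝ // IsMinorantLine a C l} => l.1.1 - l.1.2 * x) :=
  ⟨C * |x|, by rintro _ ⟨l, rfl⟩; exact l.2.le_mul_abs x⟩

theorem le_minorantEnvelope {l : ℝ × ℝ} (hl : IsMinorantLine a C l) (x : ℝ) :
    l.1 - l.2 * x ≤ minorantEnvelope a C x :=
  le_ciSup (bddAbove_range_minorantLine x) (⟨l, hl⟩ : {l : ℝ × ℝ // IsMinorantLine a C l})

theorem minorantEnvelope_le (hne : ∃ l, IsMinorantLine a C l) {x B : ℝ}
    (h : ∀ l, IsMinorantLine a C l → l.1 - l.2 * x ≤ B) : minorantEnvelope a C x ≤ B :=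
  have := nonempty_subtype.2 hne
  ciSup_le fun l => h l.1 l.2

theorem convexOn_minorantEnvelope (hne : ∃ l, IsMinorantLine a C l) :
    ConvexOn ℝ univ (minorantEnvelope a C) :=
  have := nonempty_subtype.2 hne
  convexOn_ciSup (fun _ => convexOn_const_sub_mul _ _) fun x _ => bddAbove_range_minorantLine x

theorem minorantEnvelope_zero {c : ℝ} (h₀ : IsMinorantLine a C (0, c)) :
    minorantEnvelope a C 0 = 0 :=
  le_antisymm (minorantEnvelope_le ⟨_, h₀⟩ fun _ hl => by simpa using hl.1)
    (by simpa using le_minorantEnvelope h₀ 0)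

theorem minorantEnvelope_natCast_le (hne : ∃ l, IsMinorantLine a C l) {n : ℕ} (hn : 0 < n) :
    minorantEnvelope a C n ≤ a n :=
  minorantEnvelope_le hne fun _ hl => hl.2.2 n hn

theorem minorantEnvelope_le_floor (hne : ∃ l, IsMinorantLine a C l) {x : ℝ} (hx : 1 ≤ x) :
    minorantEnvelope a C x ≤ a ⌊x⌋₊ :=
  minorantEnvelope_le hne fun l hl => calc
    l.1 - l.2 * x ≤ l.1 - l.2 * ⌊x⌋₊ := by
      gcongr
      exacts [hl.2.1.1, Nat.floor_le (by linarith)]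
    _ ≤ a ⌊x⌋₊ := hl.2.2 _ (Nat.floor_pos.2 hx)

theorem tendsto_minorantEnvelope_atBot (hne : ∃ l, IsMinorantLine a C l)
    (ha : Tendsto a atTop atBot) : Tendsto (minorantEnvelope a C) atTop atBot :=
  tendsto_atBot_mono' atTop
    (by filter_upwards [eventually_ge_atTop 1] with x hx using minorantEnvelope_le_floor hne hx)
    (ha.comp tendsto_nat_floor_atTop)

theorem exists_isMinorantLine {c : ℝ} (hc : c ∈ Icc 0 C)
    (hbdd : BddBelow (range fun n : ℕ => a n + c * n)) : ∃ q, IsMinorantLine a C (q, c) := by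
  obtain ⟨m, hm⟩ := hbdd
  refine ⟨min m 0, min_le_right _ _, hc, fun n _ => ?_⟩
  linarith [hm (mem_range_self n), min_le_left m 0]

theorem exists_isMinorantLine_zero (hbdd : BddBelow (range fun n : ℕ => a n + n)) :
    ∃ C > 0, IsMinorantLine a C (0, C) := by
  obtain ⟨m, hm⟩ := hbdd
  refine ⟨1 - min m 0, by linarith [min_le_right m 0], le_rfl, ⟨by linarith [min_le_right m 0],
    le_rfl⟩, fun n hn => ?_⟩
  have hn' : (1 : ℝ) ≤ n := Nat.one_le_cast.2 hn
  nlinarith [hm (mem_range_self n), min_le_left m 0, min_le_right m 0]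

end MinorantEnvelope

theorem exists_convexOn_strictAnti_le_of_tendsto (a : ℕ → ℝ)
    (hlin : ∀ c > 0, Tendsto (fun n : ℕ => a n + c * n) atTop atTop)
    (hbot : Tendsto a atTop atBot) :
    ∃ φ : ℝ → ℝ, φ 0 = 0 ∧ (∀ n : ℕ, 0 < n → φ n ≤ a n) ∧ Continuous φ ∧ StrictAnti φ ∧
      ConvexOn ℝ univ φ ∧ Tendsto φ atTop atBot ∧ Tendsto (fun x => φ x / x) atTop (𝓝 0) := by
  have hbdd (c : ℝ) (hc : 0 < c) := bddBelow_range_of_tendsto_atTop_atTop (hlin c hc)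
  obtain ⟨C, hC, h₀⟩ := exists_isMinorantLine_zero (by simpa using hbdd 1 one_pos)
  have hconv := convexOn_minorantEnvelope ⟨_, h₀⟩
  have htend := tendsto_minorantEnvelope_atBot ⟨_, h₀⟩ hbot
  have hanti := hconv.strictAnti_of_tendsto_atBot htend
  refine ⟨minorantEnvelope a C, minorantEnvelope_zero h₀,
    fun n hn => minorantEnvelope_natCast_le ⟨_, h₀⟩ hn,
    continuousOn_univ.1 (hconv.continuousOn isOpen_univ), hanti, hconv, htend,
    tendsto_div_self_zero_of_forall_minorant ?_ fun ε hε => ?_⟩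
  · filter_upwards [eventually_ge_atTop 0] with x hx
    exact minorantEnvelope_zero h₀ ▸ hanti.antitone hx
  · obtain ⟨q, hq⟩ := exists_isMinorantLine (c := min ε C) ⟨le_min hε.le hC.le, min_le_right _ _⟩
      (hbdd _ (lt_min hε hC))
    refine ⟨q, eventually_ge_atTop 0 |>.mono fun x hx => le_trans ?_ (le_minorantEnvelope hq x)⟩
    gcongr
    exact min_le_left _ _

/-- Step 1 of the proof of Theorem 3.3: given `ζ_n ∈ (0,1)` with `ζ_n → 0` slower than
any exponential, there is a convex, continuous, strictly decreasing function `φ : ℝ → ℝ`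
with `φ(0) = 0`, `φ(n) ≤ log ζ_n` (hence `exp(φ(n)) ≤ ζ_n`) for all `n ≥ 1`,
`φ(x) → −∞`, and `φ(x)/x → 0` as `x → ∞`. -/
theorem stmt17 (ζ : ℕ → ℝ)
    (hζ : ∀ n : ℕ, 0 < n → 0 < ζ n ∧ ζ n < 1)
    (ha : Tendsto ζ atTop (nhds 0))
    (hb : ∀ c : ℝ, 0 < c →
      Tendsto (fun n : ℕ => ζ n * Real.exp (c * n)) atTop atTop) :
    ∃ φ : ℝ → ℝ,
      φ 0 = 0 ∧
      (∀ n : ℕ, 0 < n → φ n ≤ Real.log (ζ n) ∧ Real.exp (φ n) ≤ ζ n) ∧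
      Continuous φ ∧ StrictAnti φ ∧
      ConvexOn ℝ Set.univ φ ∧
      Tendsto φ atTop atBot ∧
      Tendsto (fun x => φ x / x) atTop (nhds 0) := by
  have hlin (c : ℝ) (hc : 0 < c) :
      Tendsto (fun n : ℕ => Real.log (ζ n) + c * n) atTop atTop := by
    refine (Real.tendsto_log_atTop.comp (hb c hc)).congr' ?_
    filter_upwards [eventually_gt_atTop 0] with n hn
    simp [Real.log_mul (hζ n hn).1.ne' (Real.exp_ne_zero _)]
  have hbot : Tendsto (fun n => Real.log (ζ n)) atTop atBot :=
    Real.tendsto_log_nhdsNE_zero.comp <| tendsto_nhdsWithin_of_tendsto_nhds_of_eventually_within _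
      ha (by filter_upwards [eventually_gt_atTop 0] with n hn using (hζ n hn).1.ne')
  obtain ⟨φ, h₀, hle, hcont, hanti, hconv, htend, hdiv⟩ :=
    exists_convexOn_strictAnti_le_of_tendsto _ hlin hbot
  refine ⟨φ, h₀, fun n hn => ⟨hle n hn, ?_⟩, hcont, hanti, hconv, htend, hdiv⟩
  exact (Real.exp_le_exp.2 (hle n hn)).trans_eq (Real.exp_log (hζ n hn).1)
end
end

section
/- Suppose X = (X_k, k ∈ ℤ) is a strictly stationary sequence of real random variables satisfying the complete dissipation property: for every b > 0, sup_{r ∈ ℝ} P( r − b < n^{-1/2}(X_1 + ⋯ + X_n) < r + b ) → 0 as n → ∞. Suppose μ is a non-degenerate probability measure on ℝ (i.e., not a point mass), G is an infinite subset of ℕ, (a_n, n ∈ G) are real numbers, and (b_n, n ∈ G) are positive numbers, such that [(X_1 + X_2 + ⋯ + X_n) − a_n]/b_n converges in distribution to μ as n → ∞ along n ∈ G. Then b_n/n^{1/2} → ∞ as n → ∞ along n ∈ G. -/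
/-!
If `b n ≤ M √n` for infinitely many `n ∈ G`, take a bounded continuous `f ≤ 1` vanishing outside
`(-R, R)`. Wherever `f((S_n - a_n)/b_n) > 0`, the normalized sum `S_n/√n` lies within `R M` of
`a_n/√n`, so `E f((S_n - a_n)/b_n)` is at most the concentration function of `S_n/√n` at scale
`R M`, which tends to zero by dissipation. Weak convergence then gives `∫ f dμ ≤ 0`, which fails for
a tent function `f` equal to one on an interval of positive `μ`-mass.
-/

open MeasureTheory ProbabilityTheory Filter Topology

noncomputable section

/-- A sequence `X = (X_k, k ∈ ℤ)` of real random variables is strictly stationary if for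
every `n ≥ 1` and `j ∈ ℤ`, `(X_1, …, X_n)` has the same distribution as
`(X_{1+j}, …, X_{n+j})`. -/
def IsStrictlyStationary {Ω : Type*} [MeasurableSpace Ω] (P : Measure Ω)
    (X : ℤ → Ω → ℝ) : Prop :=
  ∀ (n : ℕ) (j : ℤ),
    Measure.map (fun ω => fun i : Fin n => X (1 + (i : ℤ)) ω) P =
    Measure.map (fun ω => fun i : Fin n => X (1 + j + (i : ℤ)) ω) P

section Concentration

variable {Ω : Type*} [MeasurableSpace Ω]

/-- Lévy's concentration function of `Z`, over open intervals of half-width `B`. -/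
def levyConcentration (P : Measure Ω) (Z : Ω → ℝ) (B : ℝ) : ℝ :=
  ⨆ r : ℝ, (P {ω | r - B < Z ω ∧ Z ω < r + B}).toReal

lemma measureReal_le_levyConcentration (P : Measure Ω) [IsFiniteMeasure P] (Z : Ω → ℝ)
    (B r : ℝ) : (P {ω | r - B < Z ω ∧ Z ω < r + B}).toReal ≤ levyConcentration P Z B := by
  refine le_ciSup (f := fun r => (P {ω | r - B < Z ω ∧ Z ω < r + B}).toReal)
    ⟨(P Set.univ).toReal, ?_⟩ r
  rintro _ ⟨r', rfl⟩
  exact ENNReal.toReal_mono (measure_ne_top P _) (measure_mono (Set.subset_univ _))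

lemma abs_inv_mul_sub_inv_mul_lt {s a b c R M : ℝ} (hb : 0 < b) (hc : 0 < c) (hbc : b ≤ M * c)
    (h : |(s - a) / b| < R) : |c⁻¹ * s - c⁻¹ * a| < R * M := by
  rw [abs_div, abs_of_pos hb, div_lt_iff₀ hb] at h
  have hR : 0 ≤ R := by nlinarith [abs_nonneg (s - a)]
  rw [← mul_sub, abs_mul, abs_inv, abs_of_pos hc, inv_mul_lt_iff₀ hc]
  calc |s - a| < R * b := h
    _ ≤ R * (M * c) := mul_le_mul_of_nonneg_left hbc hR
    _ = c * (R * M) := by ring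

lemma integral_comp_div_le_levyConcentration (P : Measure Ω) [IsFiniteMeasure P] {f : ℝ → ℝ}
    {R : ℝ} (hf_le_one : ∀ x, f x ≤ 1) (hf_nonpos : ∀ x, R ≤ |x| → f x ≤ 0) (S : Ω → ℝ)
    {a b c M : ℝ} (hb : 0 < b) (hc : 0 < c) (hbc : b ≤ M * c) :
    ∫ ω, f ((S ω - a) / b) ∂P ≤ levyConcentration P (fun ω => c⁻¹ * S ω) (R * M) := by
  set r := c⁻¹ * a
  have hvanish : ∀ ω ∈ {ω | r - R * M < c⁻¹ * S ω ∧ c⁻¹ * S ω < r + R * M}ᶜ,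
      f ((S ω - a) / b) ≤ 0 := by
    intro ω hω
    refine hf_nonpos _ (not_lt.1 fun h => hω ?_)
    have := abs_sub_lt_iff.1 (abs_inv_mul_sub_inv_mul_lt hb hc hbc h)
    exact ⟨by linarith, by linarith⟩
  refine le_trans ?_ (measureReal_le_levyConcentration P _ _ r)
  rw [← ENNReal.ofReal_le_iff_le_toReal (measure_ne_top _ _)]
  exact integral_le_measure (fun ω _ => hf_le_one _) hvanish

end Concentration

lemma exists_bump_integral_pos (μ : Measure ℝ) [IsFiniteMeasure μ] [NeZero μ] :
    ∃ (f : BoundedContinuousFunction ℝ ℝ) (R : ℝ), 0 < R ∧ (∀ x, f x ≤ 1) ∧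
      (∀ x, R ≤ |x| → f x ≤ 0) ∧ 0 < ∫ x, f x ∂μ := by
  obtain ⟨N, hN⟩ : ∃ N : ℕ, 0 < μ (Metric.closedBall 0 N) :=
    exists_measure_pos_of_not_measure_iUnion_null <| by
      simpa [Metric.iUnion_closedBall_nat] using NeZero.ne μ
  let tent : ℝ → ℝ := fun x => max 0 (min 1 (N + 1 - |x|))
  have htent : ∀ x, 0 ≤ tent x ∧ tent x ≤ 1 := fun x =>
    ⟨le_max_left _ _, max_le zero_le_one (min_le_left _ _)⟩
  let f := BoundedContinuousFunction.ofNormedAddCommGroup tent (by fun_prop) 1 fun x => by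
    rw [Real.norm_eq_abs, abs_of_nonneg (htent x).1]; exact (htent x).2
  refine ⟨f, N + 1, by positivity, fun x => (htent x).2, fun x hx => ?_, ?_⟩
  · exact max_le le_rfl ((min_le_right _ _).trans (by linarith))
  have hball : (Metric.closedBall (0 : ℝ) N).indicator 1 ≤ tent := by
    intro x
    by_cases hx : x ∈ Metric.closedBall (0 : ℝ) N
    · have habs : |x| ≤ N := by rwa [Metric.mem_closedBall, Real.dist_0_eq_abs] at hx
      rw [Set.indicator_of_mem hx, Pi.one_apply]
      exact le_max_of_le_right (le_min le_rfl (by linarith))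
    · rw [Set.indicator_of_notMem hx]; exact (htent x).1
  calc 0 < μ.real (Metric.closedBall 0 N) := ENNReal.toReal_pos hN.ne' (measure_ne_top _ _)
    _ = ∫ x, (Metric.closedBall (0 : ℝ) N).indicator 1 x ∂μ :=
      (integral_indicator_one measurableSet_closedBall).symm
    _ ≤ ∫ x, f x ∂μ :=
      integral_mono ((integrable_const 1).indicator measurableSet_closedBall) (f.integrable μ) hball

theorem stmt18_general {Ω : Type*} [MeasurableSpace Ω] (P : Measure Ω) [IsProbabilityMeasure P]
    (X : ℤ → Ω → ℝ)
    (hdiss : ∀ b : ℝ, 0 < b →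
      Tendsto (fun n : ℕ => ⨆ r : ℝ,
        (P {ω | r - b < (Real.sqrt n)⁻¹ * ∑ k ∈ Finset.Icc (1 : ℤ) (n : ℤ), X k ω ∧
                (Real.sqrt n)⁻¹ * ∑ k ∈ Finset.Icc (1 : ℤ) (n : ℤ), X k ω < r + b}).toReal)
        atTop (nhds 0))
    (μ : Measure ℝ) [IsProbabilityMeasure μ]
    (G : Set ℕ)
    (a b : ℕ → ℝ) (hb : ∀ n ∈ G, 0 < b n)
    (hconv : ∀ f : BoundedContinuousFunction ℝ ℝ,
      Tendsto (fun n : ℕ =>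
          ∫ ω, f (((∑ k ∈ Finset.Icc (1 : ℤ) (n : ℤ), X k ω) - a n) / b n) ∂P)
        (atTop ⊓ Filter.principal G) (nhds (∫ x, f x ∂μ))) :
    Tendsto (fun n : ℕ => b n / Real.sqrt n) (atTop ⊓ Filter.principal G) atTop := by
  obtain ⟨f, R, hR, hf_le_one, hf_nonpos, hf_pos⟩ := exists_bump_integral_pos μ
  suffices h : ∀ M > 0, ∀ᶠ n in atTop ⊓ 𝓟 G, M ≤ b n / Real.sqrt n from
    tendsto_atTop.2 fun M =>
      (h (max M 1) (by positivity)).mono fun n hn => (le_max_left M 1).trans hn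
  intro M hM
  by_contra hbdd
  set L := atTop ⊓ 𝓟 G ⊓ 𝓟 {n | b n / Real.sqrt n < M}
  have : L.NeBot := frequently_mem_iff_neBot.1 <| by
    simpa only [not_eventually, not_le, Set.mem_ofPred_eq] using hbdd
  have hL : L ≤ atTop ⊓ 𝓟 G := inf_le_left
  have hbound : ∀ᶠ n : ℕ in L,
      ∫ ω, f (((∑ k ∈ Finset.Icc (1 : ℤ) (n : ℤ), X k ω) - a n) / b n) ∂P ≤
      levyConcentration P (fun ω => (Real.sqrt n)⁻¹ * ∑ k ∈ Finset.Icc (1 : ℤ) (n : ℤ), X k ω)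
        (R * M) := by
    filter_upwards [(hL.trans inf_le_left) (eventually_ge_atTop 1),
      (hL.trans inf_le_right) (mem_principal_self G),
      (inf_le_right : L ≤ _) (mem_principal_self _)]
      with n hn hnG hnM
    have hsqrt : 0 < Real.sqrt n := Real.sqrt_pos.2 (by exact_mod_cast hn)
    exact integral_comp_div_le_levyConcentration P hf_le_one hf_nonpos _ (hb n hnG) hsqrt
      ((div_lt_iff₀ hsqrt).1 hnM).le
  have := le_of_tendsto_of_tendsto ((hconv f).mono_left hL)
    ((hdiss _ (mul_pos hR hM)).mono_left (hL.trans inf_le_left)) hbound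
  linarith

/-- Claim 13 of the Appendix: if a strictly stationary sequence satisfies the complete
dissipation property and `[(X_1 + ⋯ + X_n) − a_n]/b_n → μ` in distribution along an
infinite set `G ⊆ ℕ`, with `μ` non-degenerate, then `b_n/√n → ∞` along `G`. -/
theorem stmt18 {Ω : Type*} [MeasurableSpace Ω] (P : Measure Ω) [IsProbabilityMeasure P]
    (X : ℤ → Ω → ℝ) (hmeas : ∀ k, Measurable (X k))
    (hstat : IsStrictlyStationary P X)
    (hdiss : ∀ b : ℝ, 0 < b →
      Tendsto (fun n : ℕ => ⨆ r : ℝ,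
        (P {ω | r - b < (Real.sqrt n)⁻¹ * ∑ k ∈ Finset.Icc (1 : ℤ) (n : ℤ), X k ω ∧
                (Real.sqrt n)⁻¹ * ∑ k ∈ Finset.Icc (1 : ℤ) (n : ℤ), X k ω < r + b}).toReal)
        atTop (nhds 0))
    (μ : Measure ℝ) [IsProbabilityMeasure μ]
    (hnondeg : ∀ x : ℝ, μ ≠ Measure.dirac x)
    (G : Set ℕ) (hG : G.Infinite)
    (a b : ℕ → ℝ) (hb : ∀ n ∈ G, 0 < b n)
    (hconv : ∀ f : BoundedContinuousFunction ℝ ℝ,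
      Tendsto (fun n : ℕ =>
          ∫ ω, f (((∑ k ∈ Finset.Icc (1 : ℤ) (n : ℤ), X k ω) - a n) / b n) ∂P)
        (atTop ⊓ Filter.principal G) (nhds (∫ x, f x ∂μ))) :
    Tendsto (fun n : ℕ => b n / Real.sqrt n) (atTop ⊓ Filter.principal G) atTop :=
  stmt18_general P X hdiss μ G a b hb hconv
end
end
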